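/- arXiv:1609.05987 — 5 statements merged into one kernel-verified Lean document; each statement's English description precedes it below -/
import Mathlib

section
/- Let m, n ≥ 1 and let A be an invertible matrix indexed by (Fin m × Fin n) × (Fin m × Fin n) over ℂ. If the realignment R(A) has rank 1, then there exist invertible matrices A₁ : Matrix (Fin m) (Fin m) ℂ and A₂ : Matrix (Fin n) (Fin n) ℂ such that A (i,k) (j,l) = A₁ i j * A₂ k l for all i,j,k,l (i.e., A = A₁ ⊗ A₂ is a Kronecker product). -/
/-- The realignment of a matrix `A` indexed by `(Fin m × Fin n) × (Fin m × Fin n)`: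
`R(A) (i,j) (k,l) = A (i,k) (j,l)`. -/
def realign2 {m n : ℕ} (A : Matrix (Fin m × Fin n) (Fin m × Fin n) ℂ) :
    Matrix (Fin m × Fin m) (Fin n × Fin n) ℂ :=
  Matrix.of fun p q => A (p.1, q.1) (p.2, q.2)

/-!
A rank-one matrix is an outer product `u vᵀ`. Applied to `R(A)`, this says
`A (i,k) (j,l) = u (i,j) * v (k,l)`, i.e. `A = A₁ ⊗ A₂` with `A₁ = (u (i,j))` and `A₂ = (v (k,l))`.
Since `det (A₁ ⊗ A₂) = det A₁ ^ n * det A₂ ^ m` with `m, n ≥ 1`, invertibility of `A` passes to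
both factors.
-/

open scoped Kronecker

namespace Matrix

variable {m n K R : Type*}

theorem exists_eq_vecMulVec_of_rank_le_one [Field K] [Fintype n] {M : Matrix m n K}
    (h : M.rank ≤ 1) : ∃ (u : m → K) (v : n → K), M = vecMulVec u v := by
  classical
  obtain ⟨⟨u, _⟩, hspan⟩ := finrank_le_one_iff.mp h
  choose v hv using fun q => hspan ⟨M.col q, Pi.single q 1, mulVec_single_one M q⟩
  refine ⟨u, v, ext fun p q => ?_⟩
  rw [vecMulVec_apply, mul_comm]
  exact (congr_fun (congr_arg Subtype.val (hv q)) p).symm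

variable [Fintype m] [Fintype n] [DecidableEq m] [DecidableEq n] [CommRing R]

theorem isUnit_of_isUnit_kronecker_left [Nonempty n] {A : Matrix m m R} {B : Matrix n n R}
    (h : IsUnit (A ⊗ₖ B)) : IsUnit A := by
  rw [isUnit_iff_isUnit_det, det_kronecker] at *
  exact (isUnit_pow_iff Fintype.card_ne_zero).mp (isUnit_of_mul_isUnit_left h)

theorem isUnit_of_isUnit_kronecker_right [Nonempty m] {A : Matrix m m R} {B : Matrix n n R}
    (h : IsUnit (A ⊗ₖ B)) : IsUnit B := by
  rw [isUnit_iff_isUnit_det, det_kronecker] at *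
  exact (isUnit_pow_iff Fintype.card_ne_zero).mp (isUnit_of_mul_isUnit_right h)

end Matrix

/-- If the realignment of an invertible matrix `A` on `(Fin m × Fin n)` has rank 1,
then `A` is a Kronecker product of invertible matrices `A₁ ⊗ A₂`. -/
theorem kronecker_of_realign_rank_one (m n : ℕ) (hm : 1 ≤ m) (hn : 1 ≤ n)
    (A : Matrix (Fin m × Fin n) (Fin m × Fin n) ℂ) (hA : IsUnit A)
    (hrank : (realign2 A).rank = 1) :
    ∃ (A₁ : Matrix (Fin m) (Fin m) ℂ) (A₂ : Matrix (Fin n) (Fin n) ℂ),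
      IsUnit A₁ ∧ IsUnit A₂ ∧ ∀ i j k l, A (i, k) (j, l) = A₁ i j * A₂ k l := by
  obtain ⟨u, v, huv⟩ := Matrix.exists_eq_vecMulVec_of_rank_le_one hrank.le
  let A₁ : Matrix (Fin m) (Fin m) ℂ := Matrix.of fun i j => u (i, j)
  let A₂ : Matrix (Fin n) (Fin n) ℂ := Matrix.of fun k l => v (k, l)
  have hentry : ∀ i j k l, A (i, k) (j, l) = A₁ i j * A₂ k l := fun i j k l =>
    congr_fun₂ huv (i, j) (k, l)
  have hkron : A = A₁ ⊗ₖ A₂ := Matrix.ext fun _ _ => hentry _ _ _ _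
  have : Nonempty (Fin m) := ⟨⟨0, hm⟩⟩
  have : Nonempty (Fin n) := ⟨⟨0, hn⟩⟩
  rw [hkron] at hA
  exact ⟨A₁, A₂, Matrix.isUnit_of_isUnit_kronecker_left hA,
    Matrix.isUnit_of_isUnit_kronecker_right hA, hentry⟩
end

section
/- Let K ≥ 1, let n : Fin K → ℕ with n i ≥ 1 for all i, and let A be an invertible matrix indexed by (Π i : Fin K, Fin (n i)) × (Π i : Fin K, Fin (n i)) over ℂ. If for every i₀ : Fin K the realignment R_{i₀}(A) of A with respect to the bipartition {i₀} versus the remaining parties has rank 1, then there exist invertible matrices a i : Matrix (Fin (n i)) (Fin (n i)) ℂ, i : Fin K, such that A x y = ∏ i, a i (x i) (y i) for all x, y. -/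
/-- Extend a local index `a` at position `i₀` and indices `f` on the remaining
positions to a full multi-index. -/
def extendIdx {ι : Type*} [DecidableEq ι] {m : ι → ℕ} (i₀ : ι) (a : Fin (m i₀))
    (f : ∀ j : {j : ι // j ≠ i₀}, Fin (m j)) : ∀ i, Fin (m i) :=
  fun i => if h : i = i₀ then cast (congrArg (fun k => Fin (m k)) h).symm a else f ⟨i, h⟩

/-- The realignment of a matrix `A` indexed by multi-indices, with respect to the
bipartition `{i₀}` versus the remaining parties. -/
def realignAt {ι : Type*} [DecidableEq ι] {m : ι → ℕ}
    (A : Matrix (∀ i, Fin (m i)) (∀ i, Fin (m i)) ℂ) (i₀ : ι) :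
    Matrix (Fin (m i₀) × Fin (m i₀))
      ((∀ j : {j : ι // j ≠ i₀}, Fin (m j)) × (∀ j : {j : ι // j ≠ i₀}, Fin (m j))) ℂ :=
  Matrix.of fun p q => A (extendIdx i₀ p.1 q.1) (extendIdx i₀ p.2 q.2)

/-! Rank one of the `i`-th realignment says that, as a function of the pairs `(x j, y j)`, the
entry `A x y` factors as `u (x i, y i) * v (other pairs)`. Hence swapping the `i`-th pairs of two
entries does not change the product of the two entries. Swapping, one party at a time, the pairs
of an arbitrary entry with those of a fixed nonzero entry `A e f` gives
`A x y = A e f * ∏ i, N i (x i) (y i)`, with `N i` the `i`-th slice of `A` through `(e, f)`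
divided by `A e f`; a `K`-th root of `A e f` absorbs the constant. Each factor is invertible
because `det (B ⊗ₖ C) = det B ^ card _ * det C ^ card _`. -/

open Function Finset Matrix
open scoped Kronecker

theorem Matrix.exists_eq_mul_of_rank_eq_one {𝕜 m p : Type*} [Field 𝕜] [Fintype p]
    (M : Matrix m p 𝕜) (h : M.rank = 1) :
    ∃ (u : m → 𝕜) (v : p → 𝕜), ∀ i j, M i j = u i * v j := by
  classical
  rw [Matrix.rank, finrank_eq_one_iff'] at h
  obtain ⟨u, -, hspan⟩ := h
  have hcol : ∀ j, ∃ c : 𝕜, c • (u : m → 𝕜) = fun i => M i j := fun j => by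
    obtain ⟨c, hc⟩ := hspan ⟨_, Pi.single j 1, M.mulVec_single_one j⟩
    exact ⟨c, congrArg Subtype.val hc⟩
  choose v hv using hcol
  exact ⟨u, v, fun i j => by rw [← congrFun (hv j) i]; simp [mul_comm]⟩

theorem Matrix.isUnit_left_of_isUnit_kronecker {R m p : Type*} [CommRing R]
    [Fintype m] [DecidableEq m] [Fintype p] [DecidableEq p] [Nonempty p]
    {B : Matrix m m R} {C : Matrix p p R} (h : IsUnit (B ⊗ₖ C)) : IsUnit B := by
  rw [isUnit_iff_isUnit_det, det_kronecker] at h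
  rw [isUnit_iff_isUnit_det]
  exact (isUnit_pow_iff Fintype.card_ne_zero).1 (isUnit_of_mul_isUnit_left h)

theorem Matrix.isUnit_of_isUnit_of_apply_eq_prod {R ι : Type*} [CommRing R] [Fintype ι]
    [DecidableEq ι] {α : ι → Type*} [∀ i, Fintype (α i)] [∀ i, DecidableEq (α i)]
    [∀ i, Nonempty (α i)] {A : Matrix (∀ i, α i) (∀ i, α i) R}
    {a : ∀ i, Matrix (α i) (α i) R} (hA : IsUnit A)
    (h : ∀ x y, A x y = ∏ i, a i (x i) (y i)) (i : ι) : IsUnit (a i) := by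
  let e := Equiv.piSplitAt i α
  have hsplit : reindex e e A =
      a i ⊗ₖ of fun x' y' => ∏ j : {j // j ≠ i}, a j (x' j) (y' j) := by
    ext ⟨p, x'⟩ ⟨q, y'⟩
    simp only [e, h, reindex_apply, submatrix_apply, kroneckerMap_apply, of_apply,
      Fintype.prod_eq_mul_prod_subtype_ne _ i]
    congr 1
    · simp
    · refine Finset.prod_congr rfl fun j _ => ?_
      simp only [Equiv.piSplitAt_symm_apply, dif_neg j.2]
  have hunit : IsUnit (reindex e e A) := by
    rwa [isUnit_iff_isUnit_det, det_reindex_self, ← isUnit_iff_isUnit_det]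
  exact isUnit_left_of_isUnit_kronecker (hsplit ▸ hunit)

section Exchange

variable {ι : Type*} [DecidableEq ι] {β : ι → Type*}

theorem mul_eq_mul_update_of_eq_mul {M : Type*} [CommMonoid M] {T : (∀ i, β i) → M} {i : ι}
    {u : β i → M} {v : (∀ j : {j // j ≠ i}, β j) → M}
    (h : ∀ z, T z = u (z i) * v fun j => z j) (z w : ∀ i, β i) :
    T z * T w = T (update z i (w i)) * T (update w i (z i)) := by
  have hrestrict : ∀ (z : ∀ i, β i) (b : β i),
      (fun j : {j // j ≠ i} => update z i b j) = fun j : {j // j ≠ i} => z j :=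
    fun z b => funext fun j => update_of_ne j.2 b z
  rw [h z, h w, h (update z i _), h (update w i _), hrestrict, hrestrict, update_self,
    update_self]
  ac_rfl

variable {M : Type*} [CommMonoid M] {T : (∀ i, β i) → M}

theorem mul_pow_card_eq_prod_mul_piecewise
    (hT : ∀ i z w, T z * T w = T (update z i (w i)) * T (update w i (z i)))
    (z e : ∀ i, β i) (s : Finset ι) :
    T z * T e ^ #s = (∏ i ∈ s, T (update e i (z i))) * T (s.piecewise e z) := by
  induction s using Finset.induction with
  | empty => simp
  | @insert i s hi ih =>
    have hexch := hT i (s.piecewise e z) e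
    rw [piecewise_eq_of_notMem _ _ _ hi, ← piecewise_insert] at hexch
    rw [card_insert_of_notMem hi, prod_insert hi, pow_succ, ← mul_assoc, ih, mul_assoc, hexch]
    ac_rfl

end Exchange

theorem eq_mul_prod_div_of_exchange {ι 𝕜 : Type*} [Fintype ι] [DecidableEq ι]
    {β : ι → Type*} [Field 𝕜] {T : (∀ i, β i) → 𝕜}
    (hT : ∀ i z w, T z * T w = T (update z i (w i)) * T (update w i (z i)))
    {e : ∀ i, β i} (he : T e ≠ 0) (z : ∀ i, β i) :
    T z = T e * ∏ i, T (update e i (z i)) / T e := by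
  have h := mul_pow_card_eq_prod_mul_piecewise hT z e univ
  rw [piecewise_univ, card_univ] at h
  rw [prod_div_distrib, prod_const, card_univ]
  field_simp
  linear_combination h

section Realignment

variable {ι : Type*} [DecidableEq ι] {m : ι → ℕ}

def pairedEntry (A : Matrix (∀ i, Fin (m i)) (∀ i, Fin (m i)) ℂ)
    (z : ∀ i, Fin (m i) × Fin (m i)) : ℂ :=
  A (fun i => (z i).1) (fun i => (z i).2)

theorem extendIdx_restrict (i₀ : ι) (x : ∀ i, Fin (m i)) :
    extendIdx i₀ (x i₀) (fun j => x j) = x := by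
  funext i
  by_cases h : i = i₀
  · subst h; simp [extendIdx]
  · simp [extendIdx, h]

theorem pairedEntry_eq_realignAt (A : Matrix (∀ i, Fin (m i)) (∀ i, Fin (m i)) ℂ) (i₀ : ι)
    (z : ∀ i, Fin (m i) × Fin (m i)) :
    pairedEntry A z = realignAt A i₀ (z i₀) (fun j => (z j).1, fun j => (z j).2) := by
  simp only [realignAt, of_apply]
  rw [extendIdx_restrict i₀ fun i => (z i).1, extendIdx_restrict i₀ fun i => (z i).2]
  rfl

theorem pairedEntry_mul_eq_of_rank_realignAt_eq_one [Fintype ι]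
    {A : Matrix (∀ i, Fin (m i)) (∀ i, Fin (m i)) ℂ} {i₀ : ι}
    (h : (realignAt A i₀).rank = 1)
    (z w : ∀ i, Fin (m i) × Fin (m i)) :
    pairedEntry A z * pairedEntry A w =
      pairedEntry A (update z i₀ (w i₀)) * pairedEntry A (update w i₀ (z i₀)) := by
  obtain ⟨u, v, huv⟩ := (realignAt A i₀).exists_eq_mul_of_rank_eq_one h
  refine mul_eq_mul_update_of_eq_mul (T := pairedEntry A) (i := i₀) (u := u)
    (v := fun g => v (fun j => (g j).1, fun j => (g j).2)) (fun z => ?_) z w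
  rw [pairedEntry_eq_realignAt A i₀, huv]

end Realignment

/-- If every single-party realignment of an invertible matrix `A` on a `K`-fold
tensor index has rank 1, then `A` is a tensor product of invertible local matrices. -/
theorem tensor_of_realign_rank_one (K : ℕ) (hK : 1 ≤ K) (n : Fin K → ℕ)
    (hn : ∀ i, 1 ≤ n i)
    (A : Matrix (∀ i, Fin (n i)) (∀ i, Fin (n i)) ℂ) (hA : IsUnit A)
    (hrank : ∀ i₀ : Fin K, (realignAt A i₀).rank = 1) :
    ∃ a : ∀ i, Matrix (Fin (n i)) (Fin (n i)) ℂ,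
      (∀ i, IsUnit (a i)) ∧ ∀ x y, A x y = ∏ i, a i (x i) (y i) := by
  have : ∀ i, Nonempty (Fin (n i)) := fun i => ⟨⟨0, hn i⟩⟩
  obtain ⟨e, he⟩ : ∃ e, pairedEntry A e ≠ 0 := by
    by_contra! hT
    exact hA.ne_zero (ext fun x y => hT fun i => (x i, y i))
  obtain ⟨μ, hμ⟩ := IsAlgClosed.exists_pow_nat_eq (pairedEntry A e) hK
  let a i : Matrix (Fin (n i)) (Fin (n i)) ℂ :=
    μ • of fun p q => pairedEntry A (update e i (p, q)) / pairedEntry A e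
  have hexch := fun i => pairedEntry_mul_eq_of_rank_realignAt_eq_one (hrank i)
  have hprod : ∀ x y, A x y = ∏ i, a i (x i) (y i) := fun x y => by
    rw [show A x y = pairedEntry A fun i => (x i, y i) from rfl,
      eq_mul_prod_div_of_exchange hexch he]
    simp [a, prod_mul_distrib, hμ]
  exact ⟨a, isUnit_of_isUnit_of_apply_eq_prod hA hprod, hprod⟩
end

section
/- Let N₁, N₂, N₃ ≥ 1 and let A be an invertible matrix indexed by (Fin N₁ × Fin N₂ × Fin N₃) × (Fin N₁ × Fin N₂ × Fin N₃) over ℂ. Suppose there exist an invertible matrix a₁ : Matrix (Fin N₁) (Fin N₁) ℂ and an invertible matrix a₂₃ indexed by (Fin N₂ × Fin N₃) × (Fin N₂ × Fin N₃) with A (x₁,x₂,x₃) (y₁,y₂,y₃) = a₁ x₁ y₁ * a₂₃ (x₂,x₃) (y₂,y₃), and also an invertible matrix a₂ : Matrix (Fin N₂) (Fin N₂) ℂ and an invertible matrix a₁₃ indexed by (Fin N₁ × Fin N₃) × (Fin N₁ × Fin N₃) with A (x₁,x₂,x₃) (y₁,y₂,y₃) = a₂ x₂ y₂ * a₁₃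 (x₁,x₃) (y₁,y₃). Then there exists an invertible matrix a₃' : Matrix (Fin N₃) (Fin N₃) ℂ such that a₂₃ (x₂,x₃) (y₂,y₃) = a₂ x₂ y₂ * a₃' x₃ y₃ for all x₂,x₃,y₂,y₃; in particular A factorizes as a tensor product of invertible local matrices on all three factors. -/
/-!
Fix an entry `a₁ u v ≠ 0`. Comparing the two factorizations of `A` on the block `x₁ = u, y₁ = v`
gives `a₁ u v • a₂₃ = a₂ ⊗ B`, where `B` is the `(u, v)`-block of `a₁₃`, so
`a₃' := (a₁ u v)⁻¹ • B` works. It is invertible because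
`det (a₂ ⊗ a₃') = det a₂ ^ N₃ * det a₃' ^ N₂` is a unit and `N₂ ≠ 0`.
-/

namespace Matrix

theorem exists_apply_ne_zero_of_isUnit {n R : Type*} [Fintype n] [DecidableEq n] [Nonempty n]
    [Semiring R] [Nontrivial R] {M : Matrix n n R} (hM : IsUnit M) : ∃ i j, M i j ≠ 0 := by
  by_contra! h
  exact hM.ne_zero (Matrix.ext h)

theorem isUnit_of_isUnit_kronecker_right_s4 {m n R : Type*} [Fintype m] [DecidableEq m]
    [Fintype n] [DecidableEq n] [Nonempty m] [CommRing R] {a : Matrix m m R} {b : Matrix n n R}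
    (h : IsUnit (kroneckerMap (· * ·) a b)) : IsUnit b := by
  rw [isUnit_iff_isUnit_det, det_kronecker] at h
  rw [isUnit_iff_isUnit_det]
  exact (isUnit_pow_iff Fintype.card_ne_zero).mp (isUnit_of_mul_isUnit_right h)

theorem eq_kronecker_submatrix_of_mul_eq_mul {ι₁ κ₁ ι₂ κ₂ ι₃ κ₃ K : Type*} [Field K]
    {a₁ : Matrix ι₁ κ₁ K} {a₂₃ : Matrix (ι₂ × ι₃) (κ₂ × κ₃) K} {a₂ : Matrix ι₂ κ₂ K}
    {a₁₃ : Matrix (ι₁ × ι₃) (κ₁ × κ₃) K}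
    (h : ∀ x₁ x₂ x₃ y₁ y₂ y₃,
      a₁ x₁ y₁ * a₂₃ (x₂, x₃) (y₂, y₃) = a₂ x₂ y₂ * a₁₃ (x₁, x₃) (y₁, y₃))
    {u : ι₁} {v : κ₁} (huv : a₁ u v ≠ 0) :
    a₂₃ = kroneckerMap (· * ·) a₂ ((a₁ u v)⁻¹ • a₁₃.submatrix (Prod.mk u) (Prod.mk v)) := by
  ext ⟨x₂, x₃⟩ ⟨y₂, y₃⟩
  rw [kroneckerMap_apply, smul_apply, submatrix_apply, smul_eq_mul, mul_left_comm,
    ← h u x₂ x₃ v y₂ y₃, inv_mul_cancel_left₀ huv]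

end Matrix

open Matrix in
theorem tripartite_factorization_general (N₁ N₂ N₃ : ℕ) (h₁ : 1 ≤ N₁) (h₂ : 1 ≤ N₂)
    (A : Matrix (Fin N₁ × Fin N₂ × Fin N₃) (Fin N₁ × Fin N₂ × Fin N₃) ℂ)
    (a₁ : Matrix (Fin N₁) (Fin N₁) ℂ) (ha₁ : IsUnit a₁)
    (a₂₃ : Matrix (Fin N₂ × Fin N₃) (Fin N₂ × Fin N₃) ℂ) (ha₂₃ : IsUnit a₂₃)
    (hA1 : ∀ x₁ x₂ x₃ y₁ y₂ y₃,
      A (x₁, x₂, x₃) (y₁, y₂, y₃) = a₁ x₁ y₁ * a₂₃ (x₂, x₃) (y₂, y₃))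
    (a₂ : Matrix (Fin N₂) (Fin N₂) ℂ)
    (a₁₃ : Matrix (Fin N₁ × Fin N₃) (Fin N₁ × Fin N₃) ℂ)
    (hA2 : ∀ x₁ x₂ x₃ y₁ y₂ y₃,
      A (x₁, x₂, x₃) (y₁, y₂, y₃) = a₂ x₂ y₂ * a₁₃ (x₁, x₃) (y₁, y₃)) :
    ∃ a₃' : Matrix (Fin N₃) (Fin N₃) ℂ, IsUnit a₃' ∧
      (∀ x₂ x₃ y₂ y₃, a₂₃ (x₂, x₃) (y₂, y₃) = a₂ x₂ y₂ * a₃' x₃ y₃) ∧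
      (∀ x₁ x₂ x₃ y₁ y₂ y₃,
        A (x₁, x₂, x₃) (y₁, y₂, y₃) = a₁ x₁ y₁ * a₂ x₂ y₂ * a₃' x₃ y₃) := by
  have : Nonempty (Fin N₁) := ⟨⟨0, h₁⟩⟩
  have : Nonempty (Fin N₂) := ⟨⟨0, h₂⟩⟩
  obtain ⟨u, v, huv⟩ := exists_apply_ne_zero_of_isUnit ha₁
  have hfac :
      a₂₃ = kroneckerMap (· * ·) a₂ ((a₁ u v)⁻¹ • a₁₃.submatrix (Prod.mk u) (Prod.mk v)) :=
    eq_kronecker_submatrix_of_mul_eq_mul (fun x₁ x₂ x₃ y₁ y₂ y₃ => by rw [← hA1, hA2]) huv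
  refine ⟨_, isUnit_of_isUnit_kronecker_right_s4 (hfac ▸ ha₂₃),
    fun x₂ x₃ y₂ y₃ => congr_fun₂ hfac (x₂, x₃) (y₂, y₃), fun x₁ x₂ x₃ y₁ y₂ y₃ => ?_⟩
  rw [hA1, congr_fun₂ hfac (x₂, x₃) (y₂, y₃), kroneckerMap_apply, mul_assoc]

/-- If an invertible matrix `A` on a tripartite index factorizes both as
`a₁ ⊗ a₂₃` and as `a₂ ⊗ a₁₃` (with all factors invertible), then `a₂₃` itself
factorizes as `a₂ ⊗ a₃'` for some invertible `a₃'`; in particular `A` is a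
tensor product of invertible local matrices on all three factors. -/
theorem tripartite_factorization (N₁ N₂ N₃ : ℕ) (h₁ : 1 ≤ N₁) (h₂ : 1 ≤ N₂) (h₃ : 1 ≤ N₃)
    (A : Matrix (Fin N₁ × Fin N₂ × Fin N₃) (Fin N₁ × Fin N₂ × Fin N₃) ℂ) (hA : IsUnit A)
    (a₁ : Matrix (Fin N₁) (Fin N₁) ℂ) (ha₁ : IsUnit a₁)
    (a₂₃ : Matrix (Fin N₂ × Fin N₃) (Fin N₂ × Fin N₃) ℂ) (ha₂₃ : IsUnit a₂₃)
    (hA1 : ∀ x₁ x₂ x₃ y₁ y₂ y₃,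
      A (x₁, x₂, x₃) (y₁, y₂, y₃) = a₁ x₁ y₁ * a₂₃ (x₂, x₃) (y₂, y₃))
    (a₂ : Matrix (Fin N₂) (Fin N₂) ℂ) (ha₂ : IsUnit a₂)
    (a₁₃ : Matrix (Fin N₁ × Fin N₃) (Fin N₁ × Fin N₃) ℂ) (ha₁₃ : IsUnit a₁₃)
    (hA2 : ∀ x₁ x₂ x₃ y₁ y₂ y₃,
      A (x₁, x₂, x₃) (y₁, y₂, y₃) = a₂ x₂ y₂ * a₁₃ (x₁, x₃) (y₁, y₃)) :
    ∃ a₃' : Matrix (Fin N₃) (Fin N₃) ℂ, IsUnit a₃' ∧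
      (∀ x₂ x₃ y₂ y₃, a₂₃ (x₂, x₃) (y₂, y₃) = a₂ x₂ y₂ * a₃' x₃ y₃) ∧
      (∀ x₁ x₂ x₃ y₁ y₂ y₃,
        A (x₁, x₂, x₃) (y₁, y₂, y₃) = a₁ x₁ y₁ * a₂ x₂ y₂ * a₃' x₃ y₃) :=
  tripartite_factorization_general N₁ N₂ N₃ h₁ h₂ A a₁ ha₁ a₂₃ ha₂₃ hA1 a₂ a₁₃ hA2
end

section
/- Let K ≥ 2, n : Fin K → ℕ with all n i ≥ 1, and t = ⌊K/2⌋. Let φ, ψ : (Π i : Fin K, Fin (n i)) → ℂ be coefficient tensors of K-partite pure states. Suppose there exist unitary matrices X₁, X₂ on the row index set Π_{i < t} Fin (n i), unitary matrices Y₁, Y₂ on the column index set Π_{t ≤ i < K} Fin (n i), and invertible diagonal matrices B₁, B₂ (on the row and column index sets respectively) such that M(φ) = X₁ B₁ X₂† · M(ψ) · Y₂† B₂ Y₁, such that for every coordinate i < t the realignment of X₁B₁X₂† with respect to the bipartition {i} versus the remaining coordinates has rank 1, and for every coordinate j with t ≤ j < K the realignment of Y₂†B₂Y₁ with respect to the bipartition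 {j} versus the remaining coordinates has rank 1. Then φ and ψ are SLOCC equivalent. -/
/-!
The matrices `X₁B₁X₂†` and `Y₂†B₂Y₁` are invertible, and an invertible matrix `A` on a product
index set all of whose single-coordinate realignments have rank one is a Kronecker product of
invertible local matrices. Indeed, the vanishing of the `2 × 2` minors of the realignment at `i`
says that two entries of `A` may exchange their `i`-th coordinates, so fixing a nonzero entry
`A x₀ y₀` and changing one coordinate at a time gives
`A x y = A x₀ y₀ * ∏ i, A (x₀[i ↦ x i]) (y₀[i ↦ y i]) / A x₀ y₀`. A local factor is invertible
because tensoring a kernel vector of it with nonzero vectors gives a kernel vector of `A`.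
Finally `M(φ) = (⊗ᵢ Cᵢ) M(ψ) (⊗ⱼ Dⱼ)` is the matrix form of `φ = (⊗ᵢ Cᵢ ⊗ ⊗ⱼ Dⱼᵀ) ψ`.
-/
open Matrix

/-- The coefficient matrix of a `K`-partite pure-state coefficient tensor `ψ`,
with rows indexed by the tuples of the first `t` local indices and columns
indexed by the tuples of the remaining local indices. -/
def coeffMatrix {K : ℕ} {n : Fin K → ℕ} (t : ℕ) (ψ : (∀ i, Fin (n i)) → ℂ) :
    Matrix (∀ i : {i : Fin K // (i : ℕ) < t}, Fin (n i))
           (∀ i : {i : Fin K // ¬ (i : ℕ) < t}, Fin (n i)) ℂ :=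
  Matrix.of fun r c => ψ fun i => if h : (i : ℕ) < t then r ⟨i, h⟩ else c ⟨i, h⟩

theorem Matrix.mul_eq_mul_of_rank_le_one {K m n : Type*} [Field K] [Fintype n]
    {A : Matrix m n K} (h : A.rank ≤ 1) (p p' : m) (q q' : n) :
    A p q * A p' q' = A p q' * A p' q := by
  classical
  obtain ⟨v, hv⟩ := finrank_le_one_iff.mp h
  have hcol : ∀ q, ∃ c : K, ∀ p, A p q = c * (v : m → K) p := fun q => by
    obtain ⟨c, hc⟩ := hv ⟨A *ᵥ Pi.single q 1, LinearMap.mem_range_self _ _⟩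
    exact ⟨c, fun p => by simpa [mulVec_single] using (congrFun (congrArg Subtype.val hc) p).symm⟩
  obtain ⟨c, hc⟩ := hcol q
  obtain ⟨c', hc'⟩ := hcol q'
  rw [hc, hc', hc, hc']
  ring

section Realign

variable {ι : Type*} [DecidableEq ι] {m : ι → ℕ}

theorem extendIdx_eq_update (i : ι) (a : Fin (m i)) (x : ∀ j, Fin (m j)) :
    extendIdx i a (fun j => x j) = Function.update x i a := by
  funext j
  by_cases h : j = i
  · subst h; simp [extendIdx]
  · simp [extendIdx, h]

theorem mul_eq_mul_update_of_rank_realignAt_le_one [Fintype ι]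
    {A : Matrix (∀ i, Fin (m i)) (∀ i, Fin (m i)) ℂ} {i : ι} (h : (realignAt A i).rank ≤ 1)
    (x y x' y' : ∀ j, Fin (m j)) :
    A x y * A x' y' =
      A (Function.update x' i (x i)) (Function.update y' i (y i)) *
        A (Function.update x i (x' i)) (Function.update y i (y' i)) := by
  simpa [realignAt, extendIdx_eq_update] using
    Matrix.mul_eq_mul_of_rank_le_one h (x i, y i) (x' i, y' i)
      (fun j => x j, fun j => y j) (fun j => x' j, fun j => y' j)

end Realign

namespace Matrix

variable {ι R : Type*} [Fintype ι] {κ μ : ι → Type*}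

def piKronecker [CommMonoid R] (C : ∀ i, Matrix (κ i) (μ i) R) :
    Matrix (∀ i, κ i) (∀ i, μ i) R :=
  of fun x y => ∏ i, C i (x i) (y i)

@[simp]
theorem piKronecker_apply [CommMonoid R] (C : ∀ i, Matrix (κ i) (μ i) R) (x : ∀ i, κ i)
    (y : ∀ i, μ i) : piKronecker C x y = ∏ i, C i (x i) (y i) :=
  rfl

theorem transpose_piKronecker [CommMonoid R] (C : ∀ i, Matrix (κ i) (μ i) R) :
    (piKronecker C)ᵀ = piKronecker fun i => (C i)ᵀ :=
  rfl

theorem smul_piKronecker [DecidableEq ι] [CommMonoid R] (C : ∀ i, Matrix (κ i) (μ i) R) (c : R)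
    (i : ι) : c • piKronecker C = piKronecker (Function.update C i (c • C i)) := by
  ext x y
  rw [smul_apply, piKronecker_apply, piKronecker_apply,
    ← Finset.mul_prod_erase _ _ (Finset.mem_univ i),
    ← Finset.mul_prod_erase _ _ (Finset.mem_univ i)]
  simp only [Function.update_self, smul_apply, smul_eq_mul, mul_assoc]
  congr 2
  exact Finset.prod_congr rfl fun k hk => by rw [Function.update_of_ne (Finset.ne_of_mem_erase hk)]

theorem piKronecker_mulVec_prod [DecidableEq ι] [CommSemiring R] [∀ i, Fintype (μ i)]
    (C : ∀ i, Matrix (κ i) (μ i) R) (u : ∀ i, μ i → R) :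
    piKronecker C *ᵥ (fun y => ∏ i, u i (y i)) = fun x => ∏ i, (C i *ᵥ u i) (x i) := by
  ext x
  simp only [mulVec, dotProduct, piKronecker_apply, ← Finset.prod_mul_distrib, Fintype.prod_sum]

theorem isUnit_of_isUnit_piKronecker [DecidableEq ι] [Field R] [∀ i, Fintype (κ i)]
    [∀ i, DecidableEq (κ i)] [∀ i, Nonempty (κ i)] {C : ∀ i, Matrix (κ i) (κ i) R}
    (hC : IsUnit (piKronecker C)) (j : ι) : IsUnit (C j) := by
  rw [isUnit_iff_isUnit_det, isUnit_iff_ne_zero] at hC ⊢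
  intro hj
  obtain ⟨v, hv, hCv⟩ := exists_mulVec_eq_zero_iff.mpr hj
  let u : ∀ i, κ i → R := Function.update (fun _ _ => 1) j v
  have hu : ∀ i, ∃ a, u i a ≠ 0 := fun i => by
    by_cases h : i = j
    · subst h; simpa [u] using Function.ne_iff.mp hv
    · simp [u, h]
  choose y hy using hu
  refine hC (exists_mulVec_eq_zero_iff.mp ⟨fun y => ∏ i, u i (y i), ?_, ?_⟩)
  · exact Function.ne_iff.mpr ⟨y, Finset.prod_ne_zero_iff.mpr fun i _ => hy i⟩
  · rw [piKronecker_mulVec_prod]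
    ext x
    exact Finset.prod_eq_zero (Finset.mem_univ j) (by simp [u, hCv])

theorem eq_smul_piKronecker_of_swap [DecidableEq ι] [Field R]
    {A : Matrix (∀ i, κ i) (∀ i, μ i) R}
    (hswap : ∀ i x y x' y', A x y * A x' y' =
      A (Function.update x' i (x i)) (Function.update y' i (y i)) *
        A (Function.update x i (x' i)) (Function.update y i (y' i)))
    {x₀ : ∀ i, κ i} {y₀ : ∀ i, μ i} (h₀ : A x₀ y₀ ≠ 0) :
    A = A x₀ y₀ • piKronecker fun i =>
      of fun a b => A (Function.update x₀ i a) (Function.update y₀ i b) / A x₀ y₀ := by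
  set D : ∀ i, Matrix (κ i) (μ i) R :=
    fun i => of fun a b => A (Function.update x₀ i a) (Function.update y₀ i b) / A x₀ y₀
  have hfactor : ∀ s : Finset ι, ∀ x y, (∀ j ∉ s, x j = x₀ j ∧ y j = y₀ j) →
      A x y = A x₀ y₀ * ∏ i ∈ s, D i (x i) (y i) := by
    intro s
    induction s using Finset.induction_on with
    | empty =>
      intro x y hxy
      obtain rfl : x = x₀ := funext fun j => (hxy j (Finset.notMem_empty j)).1
      obtain rfl : y = y₀ := funext fun j => (hxy j (Finset.notMem_empty j)).2
      simp
    | insert i s hi ih =>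
      intro x y hxy
      have hpeel : A x y = D i (x i) (y i) *
          A (Function.update x i (x₀ i)) (Function.update y i (y₀ i)) := by
        simp only [D, of_apply]
        rw [div_mul_eq_mul_div, ← hswap, mul_div_cancel_right₀ _ h₀]
      have hrest : ∀ j ∉ s, Function.update x i (x₀ i) j = x₀ j ∧
          Function.update y i (y₀ i) j = y₀ j := fun j hj => by
        by_cases hji : j = i
        · subst hji; simp
        · simpa [hji] using hxy j (by simp [hji, hj])
      rw [hpeel, ih _ _ hrest, Finset.prod_insert hi, mul_left_comm]
      congr 2
      refine Finset.prod_congr rfl fun j hj => ?_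
      have hji : j ≠ i := fun h => hi (h ▸ hj)
      simp [hji]
  ext x y
  simpa using hfactor Finset.univ x y (by simp)

theorem isUnit_of_mem_unitaryGroup {ν α : Type*} [Fintype ν] [DecidableEq ν] [CommRing α]
    [StarRing α] {U : Matrix ν ν α} (hU : U ∈ unitaryGroup ν α) : IsUnit U :=
  Unitary.isUnit_coe (U := ⟨U, hU⟩)

theorem isUnit_mul_diagonal_mul {ν α : Type*} [Fintype ν] [DecidableEq ν] [Field α]
    {U V : Matrix ν ν α} (hU : IsUnit U) (hV : IsUnit V) {b : ν → α} (hb : ∀ r, b r ≠ 0) :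
    IsUnit (U * diagonal b * V) :=
  (hU.mul (isUnit_diagonal.mpr (Pi.isUnit_iff.mpr fun r => (hb r).isUnit))).mul hV

end Matrix

theorem exists_isUnit_piKronecker_eq_of_rank_realignAt {ι : Type*} [Fintype ι] [DecidableEq ι]
    [Nonempty ι] {m : ι → ℕ} {A : Matrix (∀ i, Fin (m i)) (∀ i, Fin (m i)) ℂ}
    (hA : IsUnit A) (hrank : ∀ i, (realignAt A i).rank = 1) (hm : ∀ i, 1 ≤ m i) :
    ∃ C : ∀ i, Matrix (Fin (m i)) (Fin (m i)) ℂ, (∀ i, IsUnit (C i)) ∧ A = piKronecker C := by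
  have : ∀ i, Nonempty (Fin (m i)) := fun i => ⟨⟨0, hm i⟩⟩
  obtain ⟨x₀, y₀, h₀⟩ : ∃ x y, A x y ≠ 0 := by
    by_contra! h
    exact hA.ne_zero (ext h)
  obtain ⟨i₀⟩ := ‹Nonempty ι›
  have hAC := (eq_smul_piKronecker_of_swap
    (fun i => mul_eq_mul_update_of_rank_realignAt_le_one (hrank i).le) h₀).trans
    (smul_piKronecker _ _ i₀)
  exact ⟨_, isUnit_of_isUnit_piKronecker (hAC ▸ hA), hAC⟩

section CoeffMatrix

variable {K : ℕ} {n : Fin K → ℕ} (t : ℕ)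

theorem coeffMatrix_injective : Function.Injective (coeffMatrix (n := n) t) := by
  intro φ ψ h
  funext x
  simpa [coeffMatrix] using congrFun (congrFun h fun i => x i) fun i => x i

theorem coeffMatrix_piKronecker_mulVec (C : ∀ i, Matrix (Fin (n i)) (Fin (n i)) ℂ)
    (ψ : (∀ i, Fin (n i)) → ℂ) :
    coeffMatrix t (piKronecker C *ᵥ ψ) =
      piKronecker (fun i : {i : Fin K // (i : ℕ) < t} => C i) * coeffMatrix t ψ *
        (piKronecker fun i : {i : Fin K // ¬ (i : ℕ) < t} => C i)ᵀ := by
  let e := Equiv.piEquivPiSubtypeProd (fun i : Fin K => (i : ℕ) < t) (fun i => Fin (n i))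
  have hcoeff (φ : (∀ i, Fin (n i)) → ℂ) r c : coeffMatrix t φ r c = φ (e.symm (r, c)) := rfl
  have hrow r c (i : {i : Fin K // (i : ℕ) < t}) : e.symm (r, c) i = r i :=
    congrFun (congrArg Prod.fst (e.apply_symm_apply (r, c))) i
  have hcol r c (i : {i : Fin K // ¬ (i : ℕ) < t}) : e.symm (r, c) i = c i :=
    congrFun (congrArg Prod.snd (e.apply_symm_apply (r, c))) i
  ext r c
  simp only [hcoeff, mulVec, dotProduct, mul_apply, piKronecker_apply, transpose_apply,
    Finset.sum_mul]
  rw [← e.symm.sum_comp, Fintype.sum_prod_type, Finset.sum_comm]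
  refine Finset.sum_congr rfl fun c' _ => Finset.sum_congr rfl fun r' _ => ?_
  rw [← Fintype.prod_subtype_mul_prod_subtype (fun i : Fin K => (i : ℕ) < t)]
  simp only [hrow, hcol]
  ring

end CoeffMatrix

/-- If the coefficient matrices of two `K`-partite pure-state coefficient tensors
are related as `M(φ) = X₁B₁X₂† M(ψ) Y₂†B₂Y₁` with `X₁, X₂, Y₁, Y₂` unitary and
`B₁, B₂` invertible diagonal, and all single-coordinate realignments of
`X₁B₁X₂†` and of `Y₂†B₂Y₁` have rank 1, then `φ` and `ψ` are SLOCC equivalent. -/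
theorem slocc_pure_sufficient (K : ℕ) (hK : 2 ≤ K) (n : Fin K → ℕ)
    (hn : ∀ i, 1 ≤ n i) (φ ψ : (∀ i, Fin (n i)) → ℂ)
    (X₁ X₂ : Matrix (∀ i : {i : Fin K // (i : ℕ) < K / 2}, Fin (n i))
                    (∀ i : {i : Fin K // (i : ℕ) < K / 2}, Fin (n i)) ℂ)
    (Y₁ Y₂ : Matrix (∀ i : {i : Fin K // ¬ (i : ℕ) < K / 2}, Fin (n i))
                    (∀ i : {i : Fin K // ¬ (i : ℕ) < K / 2}, Fin (n i)) ℂ)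
    (b₁ : (∀ i : {i : Fin K // (i : ℕ) < K / 2}, Fin (n i)) → ℂ)
    (b₂ : (∀ i : {i : Fin K // ¬ (i : ℕ) < K / 2}, Fin (n i)) → ℂ)
    (hX₁ : X₁ ∈ Matrix.unitaryGroup (∀ i : {i : Fin K // (i : ℕ) < K / 2}, Fin (n i)) ℂ)
    (hX₂ : X₂ ∈ Matrix.unitaryGroup (∀ i : {i : Fin K // (i : ℕ) < K / 2}, Fin (n i)) ℂ)
    (hY₁ : Y₁ ∈ Matrix.unitaryGroup (∀ i : {i : Fin K // ¬ (i : ℕ) < K / 2}, Fin (n i)) ℂ)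
    (hY₂ : Y₂ ∈ Matrix.unitaryGroup (∀ i : {i : Fin K // ¬ (i : ℕ) < K / 2}, Fin (n i)) ℂ)
    (hb₁ : ∀ r, b₁ r ≠ 0) (hb₂ : ∀ c, b₂ c ≠ 0)
    (hM : coeffMatrix (K / 2) φ =
      X₁ * Matrix.diagonal b₁ * X₂ᴴ * coeffMatrix (K / 2) ψ *
        Y₂ᴴ * Matrix.diagonal b₂ * Y₁)
    (hrow : ∀ i : {i : Fin K // (i : ℕ) < K / 2},
      (realignAt (X₁ * Matrix.diagonal b₁ * X₂ᴴ) i).rank = 1)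
    (hcol : ∀ j : {j : Fin K // ¬ (j : ℕ) < K / 2},
      (realignAt (Y₂ᴴ * Matrix.diagonal b₂ * Y₁) j).rank = 1) :
    ∃ C : ∀ i, Matrix (Fin (n i)) (Fin (n i)) ℂ,
      (∀ i, IsUnit (C i)) ∧ ∀ x, φ x = ∑ y, (∏ i, C i (x i) (y i)) * ψ y := by
  have : Nonempty {i : Fin K // (i : ℕ) < K / 2} := ⟨⟨⟨0, by omega⟩, by simp; omega⟩⟩
  have : Nonempty {i : Fin K // ¬ (i : ℕ) < K / 2} := ⟨⟨⟨K / 2, by omega⟩, by simp⟩⟩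
  obtain ⟨Cr, hCr, hL⟩ := exists_isUnit_piKronecker_eq_of_rank_realignAt
    (isUnit_mul_diagonal_mul (isUnit_of_mem_unitaryGroup hX₁)
      ((isUnit_conjTranspose _).mpr (isUnit_of_mem_unitaryGroup hX₂)) hb₁) hrow (hn ·)
  obtain ⟨Cc, hCc, hR⟩ := exists_isUnit_piKronecker_eq_of_rank_realignAt
    (isUnit_mul_diagonal_mul ((isUnit_conjTranspose _).mpr (isUnit_of_mem_unitaryGroup hY₂))
      (isUnit_of_mem_unitaryGroup hY₁) hb₂) hcol (hn ·)
  let C i : Matrix (Fin (n i)) (Fin (n i)) ℂ :=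
    if h : (i : ℕ) < K / 2 then Cr ⟨i, h⟩ else (Cc ⟨i, h⟩)ᵀ
  refine ⟨C, fun i => ?_, fun x => congrFun (?_ : φ = piKronecker C *ᵥ ψ) x⟩
  · by_cases h : (i : ℕ) < K / 2
    · simpa [C, h] using hCr ⟨i, h⟩
    · simpa [C, h] using hCc ⟨i, h⟩
  · have hrowC : (fun i : {i : Fin K // (i : ℕ) < K / 2} => C i) = Cr :=
      funext fun i => dif_pos i.2
    have hcolC : (fun i : {i : Fin K // ¬ (i : ℕ) < K / 2} => C i) = fun i => (Cc i)ᵀ :=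
      funext fun i => dif_neg i.2
    apply coeffMatrix_injective (K / 2)
    rw [coeffMatrix_piKronecker_mulVec, hrowC, hcolC, transpose_piKronecker]
    simp only [transpose_transpose, ← hL, ← hR, hM, Matrix.mul_assoc]
end

section
/- For positive reals a, b, c, let K = 3/2 + a + b + c + 1/a + 1/b + 1/c, and define three-qubit mixed states (8×8 complex matrices indexed by the computational basis ordered |000⟩,…,|111⟩): ρ₁ = (1/K)·[diagonal (1, a, b, c, 1/c, 1/b, 1/a, 1) with additional entries 1/2 at positions (|000⟩,|111⟩) and (|111⟩,|000⟩)], and ρ₂ the matrix given entrywise by ρ₂ = (1/(2K))·[[1+b,0,1−b,0,0,−1/2,0,1/2],[0,a+c,0,a−c,0,0,0,0],[1−b,0,1+b,0,0,−1/2,0,1/2],[0,a−c,0,a+c,0,0,0,0],[0,0,0,0,1/c+1/a,0,1/c−1/a,0],[−1/2,0,−1/2,0,0,1/b+1,0,1/b−1],[0,0,0,0,1/c−1/a,0,1/c+1/a,0],[1/2,0,1/2,0,0,1/b−1,0,1/b+1]]. Then ρ₂ = (I ⊗ U ⊗ I) ρ₁ (I ⊗ U ⊗ I)†, where U = (1/√2)·[[1,−1],[1,1]]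 and I is the 2×2 identity; in particular ρ₁ and ρ₂ are SLOCC equivalent. -/
open Matrix

/-- Encoding of the three-qubit computational basis `|i₁i₂i₃⟩` into `Fin 8`,
ordered `|000⟩, |001⟩, …, |111⟩`. -/
def enc3 (x : Fin 2 × Fin 2 × Fin 2) : Fin 8 :=
  ⟨4 * x.1.val + 2 * x.2.1.val + x.2.2.val, by
    have h1 := x.1.isLt; have h2 := x.2.1.isLt; have h3 := x.2.2.isLt; omega⟩

/-- The state `ρ₁` of Example 3: `(1/K)` times the matrix with diagonal
`(1, a, b, c, 1/c, 1/b, 1/a, 1)` and entries `1/2` at `(|000⟩,|111⟩)` and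
`(|111⟩,|000⟩)`. -/
noncomputable def rho1Ex (a b c : ℝ) :
    Matrix (Fin 2 × Fin 2 × Fin 2) (Fin 2 × Fin 2 × Fin 2) ℂ :=
  ((3/2 + a + b + c + 1/a + 1/b + 1/c : ℝ) : ℂ)⁻¹ • Matrix.of fun x y =>
    (!![1, 0, 0, 0, 0, 0, 0, 1/2;
        0, (a : ℂ), 0, 0, 0, 0, 0, 0;
        0, 0, (b : ℂ), 0, 0, 0, 0, 0;
        0, 0, 0, (c : ℂ), 0, 0, 0, 0;
        0, 0, 0, 0, 1/(c : ℂ), 0, 0, 0;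
        0, 0, 0, 0, 0, 1/(b : ℂ), 0, 0;
        0, 0, 0, 0, 0, 0, 1/(a : ℂ), 0;
        1/2, 0, 0, 0, 0, 0, 0, 1] : Matrix (Fin 8) (Fin 8) ℂ) (enc3 x) (enc3 y)

/-- The state `ρ₂` of Example 3, given entrywise. -/
noncomputable def rho2Ex (a b c : ℝ) :
    Matrix (Fin 2 × Fin 2 × Fin 2) (Fin 2 × Fin 2 × Fin 2) ℂ :=
  ((2 * (3/2 + a + b + c + 1/a + 1/b + 1/c) : ℝ) : ℂ)⁻¹ • Matrix.of fun x y =>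
    (!![1 + (b : ℂ), 0, 1 - (b : ℂ), 0, 0, -(1/2), 0, 1/2;
        0, (a : ℂ) + (c : ℂ), 0, (a : ℂ) - (c : ℂ), 0, 0, 0, 0;
        1 - (b : ℂ), 0, 1 + (b : ℂ), 0, 0, -(1/2), 0, 1/2;
        0, (a : ℂ) - (c : ℂ), 0, (a : ℂ) + (c : ℂ), 0, 0, 0, 0;
        0, 0, 0, 0, 1/(c : ℂ) + 1/(a : ℂ), 0, 1/(c : ℂ) - 1/(a : ℂ), 0;
        -(1/2), 0, -(1/2), 0, 0, 1/(b : ℂ) + 1, 0, 1/(b : ℂ) - 1;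
        0, 0, 0, 0, 1/(c : ℂ) - 1/(a : ℂ), 0, 1/(c : ℂ) + 1/(a : ℂ), 0;
        1/2, 0, 1/2, 0, 0, 1/(b : ℂ) - 1, 0, 1/(b : ℂ) + 1] :
      Matrix (Fin 8) (Fin 8) ℂ) (enc3 x) (enc3 y)

/-- The local unitary `U = (1/√2)·[[1,−1],[1,1]]`. -/
noncomputable def Uloc : Matrix (Fin 2) (Fin 2) ℂ :=
  ((Real.sqrt 2 : ℝ) : ℂ)⁻¹ • !![1, -1; 1, 1]

/-! Conjugation by `I ⊗ U ⊗ I` only mixes the middle qubit, so each entry of `T ρ₁ T†` is a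
combination of four entries of `ρ₁`. Writing `U = V / √2` with `V = [[1, -1], [1, 1]]`, the identity
becomes `ρ₂ = ½ (I ⊗ V ⊗ I) ρ₁ (I ⊗ V ⊗ I)†`, a polynomial identity checked entrywise. As `U` is
unitary, conjugating back by `I ⊗ U† ⊗ I` recovers `ρ₁`, which is the SLOCC equivalence. -/

open Kronecker

theorem Matrix.of_mul_mul_eq_kronecker {α l l' m m' n n' : Type*} [Semigroup α]
    (A : Matrix l l' α) (B : Matrix m m' α) (C : Matrix n n' α) :
    of (fun (x : l × m × n) (y : l' × m' × n') => A x.1 y.1 * B x.2.1 y.2.1 * C x.2.2 y.2.2) =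
      A ⊗ₖ (B ⊗ₖ C) := by
  ext
  simp [mul_assoc]

theorem Matrix.one_kronecker_kronecker_one_mul_mul_conjTranspose_apply {α l m n : Type*}
    [CommSemiring α] [StarRing α] [Fintype l] [Fintype m] [Fintype n] [DecidableEq l]
    [DecidableEq n] (U : Matrix m m α) (ρ : Matrix (l × m × n) (l × m × n) α)
    (i i' : l) (j j' : m) (k k' : n) :
    (1 ⊗ₖ (U ⊗ₖ 1) * ρ * (1 ⊗ₖ (U ⊗ₖ 1))ᴴ : Matrix (l × m × n) (l × m × n) α)
      (i, j, k) (i', j', k') =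
      ∑ p, ∑ q, U j p * ρ (i, p, k) (i', q, k') * star (U j' q) := by
  simp [mul_apply, Fintype.sum_prod_type, one_apply, Finset.sum_mul, apply_ite star, mul_ite]
  exact Finset.sum_comm

theorem Unitary.eq_star_mul_mul_of_eq_mul_mul_star {R : Type*} [Monoid R] [StarMul R]
    {U x y : R} (hU : U ∈ unitary R) (h : y = U * x * star U) :
    x = star U * y * star (star U) := by
  rw [h, star_star, ← mul_assoc, ← mul_assoc, Unitary.star_mul_self_of_mem hU, one_mul,
    mul_assoc, Unitary.star_mul_self_of_mem hU, mul_one]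

theorem Uloc_mem_unitary : Uloc ∈ unitary (Matrix (Fin 2) (Fin 2) ℂ) := by
  have hs : ((√2 : ℝ) : ℂ) ^ 2 = 2 := by norm_cast; simp
  rw [Unitary.mem_iff]
  constructor <;> ext i j <;> fin_cases i <;> fin_cases j <;>
    simp [Uloc, mul_apply, Fin.sum_univ_two, ← sq, hs] <;> norm_num

theorem rho2Ex_eq_half_smul_conj (a b c : ℝ) :
    rho2Ex a b c = (2⁻¹ : ℂ) • (1 ⊗ₖ (!![1, -1; 1, 1] ⊗ₖ 1) * rho1Ex a b c *
      (1 ⊗ₖ (!![1, -1; 1, 1] ⊗ₖ 1))ᴴ) := by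
  ext ⟨i, j, k⟩ ⟨i', j', k'⟩
  rw [Matrix.smul_apply, one_kronecker_kronecker_one_mul_mul_conjTranspose_apply]
  simp only [rho1Ex, rho2Ex, Matrix.smul_apply, of_apply, Fin.sum_univ_two, smul_eq_mul]
  fin_cases i <;> fin_cases j <;> fin_cases k <;> fin_cases i' <;> fin_cases j' <;>
    fin_cases k' <;> simp [enc3] <;> ring

theorem rho2Ex_eq_conj (a b c : ℝ) :
    rho2Ex a b c = 1 ⊗ₖ (Uloc ⊗ₖ 1) * rho1Ex a b c * (1 ⊗ₖ (Uloc ⊗ₖ 1))ᴴ := by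
  have hs : ((√2 : ℝ) : ℂ)⁻¹ * star ((√2 : ℝ) : ℂ)⁻¹ = 2⁻¹ := by
    rw [star_inv₀, Complex.star_def, Complex.conj_ofReal, ← mul_inv, ← Complex.ofReal_mul,
      Real.mul_self_sqrt zero_le_two, Complex.ofReal_ofNat]
  rw [rho2Ex_eq_half_smul_conj, Uloc, smul_kronecker, kronecker_smul, conjTranspose_smul,
    smul_mul, smul_mul, Matrix.mul_smul, smul_smul, hs]

theorem rho2_eq_conj_rho1_general (a b c : ℝ) :
    rho2Ex a b c =
      (Matrix.of fun x y : Fin 2 × Fin 2 × Fin 2 =>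
          (1 : Matrix (Fin 2) (Fin 2) ℂ) x.1 y.1 * Uloc x.2.1 y.2.1 *
            (1 : Matrix (Fin 2) (Fin 2) ℂ) x.2.2 y.2.2) *
        rho1Ex a b c *
        (Matrix.of fun x y : Fin 2 × Fin 2 × Fin 2 =>
          (1 : Matrix (Fin 2) (Fin 2) ℂ) x.1 y.1 * Uloc x.2.1 y.2.1 *
            (1 : Matrix (Fin 2) (Fin 2) ℂ) x.2.2 y.2.2)ᴴ ∧
    ∃ a₁ a₂ a₃ : Matrix (Fin 2) (Fin 2) ℂ,
      IsUnit a₁ ∧ IsUnit a₂ ∧ IsUnit a₃ ∧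
      rho1Ex a b c =
        (Matrix.of fun x y : Fin 2 × Fin 2 × Fin 2 =>
            a₁ x.1 y.1 * a₂ x.2.1 y.2.1 * a₃ x.2.2 y.2.2) *
          rho2Ex a b c *
          (Matrix.of fun x y : Fin 2 × Fin 2 × Fin 2 =>
            a₁ x.1 y.1 * a₂ x.2.1 y.2.1 * a₃ x.2.2 y.2.2)ᴴ := by
  have hU := Uloc_mem_unitary
  have hT :
      1 ⊗ₖ (Uloc ⊗ₖ 1) ∈ unitary (Matrix (Fin 2 × Fin 2 × Fin 2) (Fin 2 × Fin 2 × Fin 2) ℂ) :=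
    kronecker_mem_unitary (one_mem _) (kronecker_mem_unitary hU (one_mem _))
  have hT_star : (1 ⊗ₖ (Ulocᴴ ⊗ₖ 1) : Matrix (Fin 2 × Fin 2 × Fin 2) (Fin 2 × Fin 2 × Fin 2) ℂ) =
      (1 ⊗ₖ (Uloc ⊗ₖ 1))ᴴ := by
    simp only [conjTranspose_kronecker, conjTranspose_one]
  refine ⟨?_, 1, Ulocᴴ, 1, isUnit_one, Unitary.isUnit_coe (U := ⟨_, Unitary.star_mem hU⟩),
    isUnit_one, ?_⟩ <;> rw [of_mul_mul_eq_kronecker]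
  · exact rho2Ex_eq_conj a b c
  rw [hT_star]
  exact Unitary.eq_star_mul_mul_of_eq_mul_mul_star hT (rho2Ex_eq_conj a b c)

/-- Example 3: `ρ₂ = (I ⊗ U ⊗ I) ρ₁ (I ⊗ U ⊗ I)†`, and in particular `ρ₁`
and `ρ₂` are SLOCC equivalent. -/
theorem rho2_eq_conj_rho1 (a b c : ℝ) (ha : 0 < a) (hb : 0 < b) (hc : 0 < c) :
    rho2Ex a b c =
      (Matrix.of fun x y : Fin 2 × Fin 2 × Fin 2 =>
          (1 : Matrix (Fin 2) (Fin 2) ℂ) x.1 y.1 * Uloc x.2.1 y.2.1 *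
            (1 : Matrix (Fin 2) (Fin 2) ℂ) x.2.2 y.2.2) *
        rho1Ex a b c *
        (Matrix.of fun x y : Fin 2 × Fin 2 × Fin 2 =>
          (1 : Matrix (Fin 2) (Fin 2) ℂ) x.1 y.1 * Uloc x.2.1 y.2.1 *
            (1 : Matrix (Fin 2) (Fin 2) ℂ) x.2.2 y.2.2)ᴴ ∧
    ∃ a₁ a₂ a₃ : Matrix (Fin 2) (Fin 2) ℂ,
      IsUnit a₁ ∧ IsUnit a₂ ∧ IsUnit a₃ ∧
      rho1Ex a b c =
        (Matrix.of fun x y : Fin 2 × Fin 2 × Fin 2 =>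
            a₁ x.1 y.1 * a₂ x.2.1 y.2.1 * a₃ x.2.2 y.2.2) *
          rho2Ex a b c *
          (Matrix.of fun x y : Fin 2 × Fin 2 × Fin 2 =>
            a₁ x.1 y.1 * a₂ x.2.1 y.2.1 * a₃ x.2.2 y.2.2)ᴴ :=
  rho2_eq_conj_rho1_general a b c
end
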